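/- arXiv:1809.07135 — 7 statements merged into one kernel-verified Lean document; each statement's English description precedes it below -/
import Mathlib

section
/- Let f be analytic on D with f(0)=0, f'(0)=1, and suppose U_f(z) := (z/f(z))^2 f'(z) - 1 is identically zero on D (with z/f(z) extended analytically at 0). Then f(z) = z/(1 - a_2 z) for all z ∈ D, where a_2 = f''(0)/2. -/
/-!
On the disc `g = z / f` has no zeros, so `f = z / g` and `g² f' = 1` becomes the Euler-type
equation `z g' = g - 1`. Differentiating it once more gives `z g'' = 0`, hence `g'' ≡ 0` by
continuity at the origin, so `g = 1 + g'(0) z` is affine. Then `f = z / (1 + g'(0) z)` and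
`f' = (1 + g'(0) z)⁻²` gives `f''(0) = -2 g'(0)`.
-/

open Complex Metric Set Filter Topology

theorem eqOn_zero_of_mul_eq_zero {U : Set ℂ} {φ : ℂ → ℂ} (hU : IsOpen U)
    (hφ : ContinuousOn φ U) (h : ∀ z ∈ U, z * φ z = 0) : EqOn φ 0 U := by
  intro z hz
  rcases eq_or_ne z 0 with rfl | hz0
  · have hpunct : ∀ᶠ w in 𝓝[≠] (0 : ℂ), 0 = φ w := by
      filter_upwards [nhdsWithin_le_nhds (hU.mem_nhds hz), self_mem_nhdsWithin] with w hw hw0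
      exact ((mul_eq_zero.1 (h w hw)).resolve_left hw0).symm
    exact tendsto_nhds_unique
      ((hφ.continuousAt (hU.mem_nhds hz)).tendsto.mono_left nhdsWithin_le_nhds)
      (tendsto_const_nhds.congr' hpunct)
  · exact (mul_eq_zero.1 (h z hz)).resolve_left hz0

section EulerEquation

variable {U : Set ℂ} {g : ℂ → ℂ} {a : ℂ}

theorem mul_deriv_deriv_eq_zero_of_mul_deriv_eq_sub (hU : IsOpen U)
    (hg : DifferentiableOn ℂ g U) (hode : ∀ z ∈ U, z * deriv g z = g z - a) :
    ∀ z ∈ U, z * deriv (deriv g) z = 0 := by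
  intro z hz
  have hlhs : HasDerivAt (fun w => w * deriv g w) (1 * deriv g z + z * deriv (deriv g) z) z :=
    (hasDerivAt_id z).mul ((hg.deriv hU).differentiableAt (hU.mem_nhds hz)).hasDerivAt
  have hrhs : HasDerivAt (fun w => g w - a) (deriv g z) z :=
    (hg.differentiableAt (hU.mem_nhds hz)).hasDerivAt.sub_const a
  have hsame : (fun w => w * deriv g w) =ᶠ[𝓝 z] fun w => g w - a :=
    eventually_of_mem (hU.mem_nhds hz) hode
  linear_combination hlhs.unique (hrhs.congr_of_eventuallyEq hsame)

theorem eq_add_mul_of_mul_deriv_eq_sub (hU : IsOpen U) (hUc : IsPreconnected U) (h0 : 0 ∈ U)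
    (hg : DifferentiableOn ℂ g U) (hode : ∀ z ∈ U, z * deriv g z = g z - a) :
    ∀ z ∈ U, g z = a + deriv g 0 * z := by
  have hg'' : EqOn (deriv (deriv g)) 0 U :=
    eqOn_zero_of_mul_eq_zero hU ((hg.deriv hU).deriv hU).continuousOn
      (mul_deriv_deriv_eq_zero_of_mul_deriv_eq_sub hU hg hode)
  intro z hz
  have hg' : deriv g z = deriv g 0 := hU.is_const_of_deriv_eq_zero hUc (hg.deriv hU) hg'' hz h0
  linear_combination -hode z hz + z * hg'

end EulerEquation

theorem mul_deriv_eq_sub_one_of_sq_mul_deriv_eq_one {U : Set ℂ} {f g : ℂ → ℂ} (hU : IsOpen U)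
    (hg : DifferentiableOn ℂ g U) (hgf : ∀ z ∈ U, g z * f z = z)
    (hfg : ∀ z ∈ U, g z ^ 2 * deriv f z = 1) :
    ∀ z ∈ U, z * deriv g z = g z - 1 := by
  have hne : ∀ z ∈ U, g z ≠ 0 := fun z hz h => by simpa [h] using hfg z hz
  intro z hz
  have hf : f =ᶠ[𝓝 z] fun w => w / g w := by
    filter_upwards [hU.mem_nhds hz] with w hw
    rw [eq_div_iff (hne w hw), mul_comm, hgf w hw]
  have hdiv := ((hasDerivAt_id' z).div (hg.differentiableAt (hU.mem_nhds hz)).hasDerivAt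
    (hne z hz)).congr_of_eventuallyEq hf
  have hone := hfg z hz
  rw [hdiv.deriv] at hone
  field_simp [hne z hz] at hone
  linear_combination -hone

theorem iteratedDeriv_two_eq_of_sq_mul_deriv_eq_one {f : ℂ → ℂ} {c : ℂ}
    (h : ∀ᶠ z in 𝓝 0, (1 + c * z) ^ 2 * deriv f z = 1) :
    iteratedDeriv 2 f 0 = -2 * c := by
  have hf' : deriv f =ᶠ[𝓝 0] fun z => ((1 + c * z) ^ 2)⁻¹ := by
    filter_upwards [h] with z hz
    exact eq_inv_of_mul_eq_one_right hz
  have hlin : HasDerivAt (fun z : ℂ => 1 + c * z) c 0 := by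
    simpa using ((hasDerivAt_id (0 : ℂ)).const_mul c).const_add 1
  have hinv : HasDerivAt (fun z : ℂ => ((1 + c * z) ^ 2)⁻¹)
      (-(2 * (1 + c * 0) ^ 1 * c) / ((1 + c * 0) ^ 2) ^ 2) 0 :=
    (hlin.pow 2).inv (by norm_num)
  rw [iteratedDeriv_succ, iteratedDeriv_one, hf'.deriv_eq, hinv.deriv]
  norm_num

theorem stmt3_general (f g : ℂ → ℂ)
    (hg : AnalyticOn ℂ g (ball 0 1))
    (hgf : ∀ z ∈ ball (0:ℂ) 1, g z * f z = z)
    (hU : ∀ z ∈ ball (0:ℂ) 1, (g z) ^ 2 * deriv f z - 1 = 0) :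
    ∀ z ∈ ball (0:ℂ) 1, f z = z / (1 - (iteratedDeriv 2 f 0 / 2) * z) := by
  have hgd := hg.differentiableOn
  have hfg : ∀ z ∈ ball (0:ℂ) 1, g z ^ 2 * deriv f z = 1 := fun z hz => sub_eq_zero.1 (hU z hz)
  have hlin : ∀ z ∈ ball (0:ℂ) 1, g z = 1 + deriv g 0 * z :=
    eq_add_mul_of_mul_deriv_eq_sub isOpen_ball (convex_ball 0 1).isPreconnected
      (mem_ball_self one_pos) hgd (mul_deriv_eq_sub_one_of_sq_mul_deriv_eq_one isOpen_ball hgd hgf hfg)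
  have hf'' : iteratedDeriv 2 f 0 = -2 * deriv g 0 :=
    iteratedDeriv_two_eq_of_sq_mul_deriv_eq_one <|
      eventually_of_mem (ball_mem_nhds 0 one_pos) fun z hz => hlin z hz ▸ hfg z hz
  intro z hz
  have hgz : g z ≠ 0 := fun h => by simpa [h] using hfg z hz
  calc f z = z / g z := by rw [eq_div_iff hgz, mul_comm, hgf z hz]
    _ = z / (1 - (iteratedDeriv 2 f 0 / 2) * z) := by rw [hlin z hz, hf'']; ring_nf

theorem stmt3 (f g : ℂ → ℂ)
    (hf : AnalyticOn ℂ f (ball 0 1))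
    (hf0 : f 0 = 0) (hf'0 : deriv f 0 = 1)
    (hfne : ∀ z ∈ ball (0:ℂ) 1, z ≠ 0 → f z ≠ 0)
    (hg : AnalyticOn ℂ g (ball 0 1)) (hg0 : g 0 = 1)
    (hgf : ∀ z ∈ ball (0:ℂ) 1, g z * f z = z)
    (hU : ∀ z ∈ ball (0:ℂ) 1, (g z) ^ 2 * deriv f z - 1 = 0) :
    ∀ z ∈ ball (0:ℂ) 1, f z = z / (1 - (iteratedDeriv 2 f 0 / 2) * z) :=
  stmt3_general f g hg hgf hU
end

section
/- Let f be analytic on the unit disc D with f(0)=0, f'(0)=1, f''(0)=0, and suppose 0 < |U_f(z)| ≤ λ|z|^2 for all z ∈ D \ {0}, where λ ∈ (0,1). Define for z ∈ D, t ≥ 0: f(z,t) = z·f(e^{-t}z) / (z - (e^t - e^{-t}) f(e^{-t}z)). Then the function p(z,t) := (∂f/∂t)(z,t) / (z · (∂f/∂z)(z,t)) satisfies |(p(z,t)-1)/(p(z,t)+1)| = e^{2t}|U_f(e^{-t}z)| ≤ λ|z|^2 for all z ∈ D with z ≠ 0 and t ≥ 0, and hence Re p(z,t) > 0. -/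
open Complex Metric Set

lemma aux_sum (f g : ℂ → ℂ)
    (hf : AnalyticOn ℂ f (ball 0 1)) (hg : AnalyticOn ℂ g (ball 0 1))
    (hgf : ∀ z ∈ ball (0:ℂ) 1, g z * f z = z) :
    ∀ v ∈ ball (0:ℂ) 1, deriv g v * f v + g v * deriv f v = 1 := by
  have hf' : AnalyticOnNhd ℂ f (ball 0 1) := (isOpen_ball.analyticOn_iff_analyticOnNhd).1 hf
  have hg' : AnalyticOnNhd ℂ g (ball 0 1) := (isOpen_ball.analyticOn_iff_analyticOnNhd).1 hg
  intro v hv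
  have hfd : DifferentiableAt ℂ f v := (hf' v hv).differentiableAt
  have hgd : DifferentiableAt ℂ g v := (hg' v hv).differentiableAt
  have h2 : (fun x => g x * f x) =ᶠ[nhds v] (fun x => x) :=
    Filter.eventually_of_mem (isOpen_ball.mem_nhds hv) hgf
  have h3 := h2.deriv_eq
  rw [deriv_fun_mul hgd hfd] at h3
  rw [h3]; simp

lemma aux_g0 (f g : ℂ → ℂ)
    (hf : AnalyticOn ℂ f (ball 0 1)) (hg : AnalyticOn ℂ g (ball 0 1))
    (hf0 : f 0 = 0) (hf'0 : deriv f 0 = 1) (hf''0 : iteratedDeriv 2 f 0 = 0)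
    (hg0 : g 0 = 1)
    (hgf : ∀ z ∈ ball (0:ℂ) 1, g z * f z = z) :
    deriv g 0 = 0 := by
  have hf' : AnalyticOnNhd ℂ f (ball 0 1) := (isOpen_ball.analyticOn_iff_analyticOnNhd).1 hf
  have hg' : AnalyticOnNhd ℂ g (ball 0 1) := (isOpen_ball.analyticOn_iff_analyticOnNhd).1 hg
  have h0 : (0:ℂ) ∈ ball (0:ℂ) 1 := by simp
  have hsum := aux_sum f g hf hg hgf
  have hψ : (fun v => deriv g v * f v + g v * deriv f v) =ᶠ[nhds (0:ℂ)] (fun _ => (1:ℂ)) :=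
    Filter.eventually_of_mem (isOpen_ball.mem_nhds h0) hsum
  have hd := hψ.deriv_eq
  rw [deriv_const] at hd
  have hfd : DifferentiableAt ℂ f 0 := (hf' 0 h0).differentiableAt
  have hgd : DifferentiableAt ℂ g 0 := (hg' 0 h0).differentiableAt
  have hfd' : DifferentiableAt ℂ (deriv f) 0 := ((hf'.deriv) 0 h0).differentiableAt
  have hgd' : DifferentiableAt ℂ (deriv g) 0 := ((hg'.deriv) 0 h0).differentiableAt
  rw [deriv_fun_add (hgd'.fun_mul hfd) (hgd.fun_mul hfd'), deriv_fun_mul hgd' hfd, deriv_fun_mul hgd hfd'] at hd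
  have h2 : deriv (deriv f) 0 = 0 := by
    rw [show deriv (deriv f) = iteratedDeriv 2 f by
      rw [iteratedDeriv_succ, iteratedDeriv_one]]
    exact hf''0
  rw [hf0, hf'0, hg0, h2] at hd
  simp at hd
  exact hd

lemma aux_bnd (f g : ℂ → ℂ) (lam : ℝ) (hlam0 : 0 ≤ lam)
    (hf : AnalyticOn ℂ f (ball 0 1)) (hg : AnalyticOn ℂ g (ball 0 1))
    (hg0 : g 0 = 1) (hgd0 : deriv g 0 = 0)
    (hgf : ∀ z ∈ ball (0:ℂ) 1, g z * f z = z)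
    (hU : ∀ z ∈ ball (0:ℂ) 1, z ≠ 0 →
      ‖(g z) ^ 2 * deriv f z - 1‖ ≤ lam * ‖z‖ ^ 2) :
    ∀ w ∈ ball (0:ℂ) 1, ‖g w - 1‖ ≤ lam * ‖w‖ ^ 2 := by
  have hf' : AnalyticOnNhd ℂ f (ball 0 1) := (isOpen_ball.analyticOn_iff_analyticOnNhd).1 hf
  have hg' : AnalyticOnNhd ℂ g (ball 0 1) := (isOpen_ball.analyticOn_iff_analyticOnNhd).1 hg
  have hsum := aux_sum f g hf hg hgf
  intro w hw
  rcases eq_or_ne w 0 with rfl | hw0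
  · simp [hg0]
  set h : ℂ → ℂ := fun v => (g v - 1) / v with hh
  -- derivative of h on ball minus 0
  have hder : ∀ x ∈ ball (0:ℂ) 1, x ≠ 0 →
      HasDerivAt h (-((g x)^2 * deriv f x - 1)/x^2) x := by
    intro x hx hx0
    have hfd : DifferentiableAt ℂ f x := (hf' x hx).differentiableAt
    have hgd : DifferentiableAt ℂ g x := (hg' x hx).differentiableAt
    have hfx0 : f x ≠ 0 := by
      intro hfx
      have := hgf x hx
      rw [hfx, mul_zero] at this
      exact hx0 this.symm
    have h1 : HasDerivAt h (deriv g x * x⁻¹ + (g x - 1) * (-(x^2)⁻¹)) x := by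
      have := ((hgd.hasDerivAt.sub_const 1).fun_mul (hasDerivAt_inv hx0))
      simpa [hh, div_eq_mul_inv, mul_comm, add_comm] using this
    convert h1 using 1
    have rel1 : deriv g x * f x + g x * deriv f x = 1 := hsum x hx
    have rel2 : g x * f x = x := hgf x hx
    rw [div_eq_iff (pow_ne_zero 2 hx0)]
    have key : deriv g x * x = g x - (g x)^2 * deriv f x := by
      linear_combination (g x)*rel1 - (deriv g x)*rel2
    have e1 : x⁻¹ * x^2 = x := by rw [pow_two, ← mul_assoc, inv_mul_cancel₀ hx0, one_mul]
    have e2 : (x^2)⁻¹ * x^2 = 1 := inv_mul_cancel₀ (pow_ne_zero 2 hx0)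
    linear_combination -key - deriv g x * e1 + (g x - 1) * e2
  -- mean value estimate on segments avoiding 0
  have seg : ∀ ε : ℝ, ε ∈ Ioo (0:ℝ) 1 →
      ‖h w - h ((ε:ℂ)*w)‖ ≤ lam * ‖w - (ε:ℂ)*w‖ := by
    intro ε hε
    have hsub : segment ℝ ((ε:ℂ)*w) w ⊆ {x : ℂ | x ∈ ball (0:ℂ) 1 ∧ x ≠ 0} := by
      intro x hx
      rw [segment_eq_image] at hx
      obtain ⟨θ, hθ, hxe⟩ := hx
      have hxe' : x = (((1-θ)*ε + θ : ℝ) : ℂ) * w := by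
        rw [← hxe]; push_cast; simp [smul_eq_mul]; ring
      have hτ1 : (1-θ)*ε + θ ≤ 1 := by nlinarith [hθ.1, hθ.2, hε.1, hε.2]
      have hτ0 : 0 < (1-θ)*ε + θ := by nlinarith [hθ.1, hθ.2, hε.1, hε.2]
      constructor
      · rw [mem_ball, dist_zero_right] at hw ⊢
        rw [hxe']
        calc ‖(((1-θ)*ε + θ : ℝ) : ℂ) * w‖ = |(1-θ)*ε + θ| * ‖w‖ := by
              rw [norm_mul, Complex.norm_real, Real.norm_eq_abs]
          _ ≤ 1 * ‖w‖ := by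
              apply mul_le_mul_of_nonneg_right _ (norm_nonneg w)
              rw [abs_of_pos hτ0]; exact hτ1
          _ < 1 := by rw [one_mul]; exact hw
      · rw [hxe']
        exact mul_ne_zero (Complex.ofReal_ne_zero.2 (ne_of_gt hτ0)) hw0
    refine Convex.norm_image_sub_le_of_norm_hasDerivWithin_le
      (f' := fun x => -((g x)^2 * deriv f x - 1)/x^2)
      (fun x hx => ((hder x (hsub hx).1 (hsub hx).2).hasDerivWithinAt)) ?_
      (convex_segment _ _) (left_mem_segment ℝ _ _) (right_mem_segment ℝ _ _)
    intro x hx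
    obtain ⟨hx1, hx0⟩ := hsub hx
    have hUx := hU x hx1 hx0
    have hax : (0:ℝ) < ‖x‖ := by
      simpa [norm_pos_iff] using hx0
    rw [norm_div, norm_neg, norm_pow]
    rw [div_le_iff₀ (by positivity)]
    calc ‖(g x)^2 * deriv f x - 1‖ ≤ lam * ‖x‖ ^ 2 := hUx
      _ = lam * ‖x‖ ^ 2 := rfl
  -- limit as ε → 0
  have hgd : DifferentiableAt ℂ g 0 := (hg' 0 (by simp)).differentiableAt
  have hslope : Filter.Tendsto h (nhdsWithin (0:ℂ) {x | x ≠ 0}) (nhds 0) := by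
    have h1 : HasDerivAt g 0 0 := by simpa [hgd0] using hgd.hasDerivAt
    have h2 := hasDerivAt_iff_tendsto_slope.1 h1
    have : slope g 0 = h := by
      funext v
      simp only [slope_def_field, hh, hg0, sub_zero]
    rwa [this] at h2
  have hm : Filter.Tendsto (fun ε : ℝ => (ε:ℂ)*w) (nhdsWithin (0:ℝ) (Ioi (0:ℝ)))
      (nhdsWithin (0:ℂ) {x | x ≠ 0}) := by
    rw [tendsto_nhdsWithin_iff]
    constructor
    · have : Filter.Tendsto (fun ε : ℝ => (ε:ℂ)*w) (nhds 0) (nhds 0) := by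
        have := (Complex.continuous_ofReal.tendsto (0:ℝ)).mul_const w
        simpa using this
      exact this.mono_left nhdsWithin_le_nhds
    · filter_upwards [self_mem_nhdsWithin] with ε hε
      exact mul_ne_zero (Complex.ofReal_ne_zero.2 (ne_of_gt hε)) hw0
  have hΦ : Filter.Tendsto (fun ε : ℝ => ‖h ((ε:ℂ)*w)‖) (nhdsWithin (0:ℝ) (Ioi (0:ℝ)))
      (nhds 0) := by
    have := (hslope.comp hm).norm
    simpa using this
  have hlim : Filter.Tendsto (fun ε : ℝ => lam * ‖w‖ + ‖h ((ε:ℂ)*w)‖)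
      (nhdsWithin (0:ℝ) (Ioi (0:ℝ))) (nhds (lam * ‖w‖ + 0)) :=
    tendsto_const_nhds.add hΦ
  have hev : ∀ᶠ (ε : ℝ) in nhdsWithin (0:ℝ) (Ioi (0:ℝ)), ‖h w‖ ≤ lam * ‖w‖ + ‖h ((ε:ℂ)*w)‖ := by
    filter_upwards [Ioo_mem_nhdsGT_of_mem (by norm_num : (0:ℝ) ∈ Ico (0:ℝ) 1)] with ε hε
    have h1 := seg ε hε
    have h2 : ‖w - (ε:ℂ)*w‖ ≤ ‖w‖ := by
      have : w - (ε:ℂ)*w = ((1-ε:ℝ):ℂ)*w := by push_cast; ring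
      rw [this, norm_mul, Complex.norm_real, Real.norm_eq_abs,
        _root_.abs_of_nonneg (by linarith [hε.2])]
      nlinarith [norm_nonneg w, hε.1, hε.2]
    calc ‖h w‖ ≤ ‖h w - h ((ε:ℂ)*w)‖ + ‖h ((ε:ℂ)*w)‖ := by
          simpa using norm_add_le (h w - h ((ε:ℂ)*w)) (h ((ε:ℂ)*w))
      _ ≤ lam * ‖w - (ε:ℂ)*w‖ + ‖h ((ε:ℂ)*w)‖ := by linarith
      _ ≤ lam * ‖w‖ + ‖h ((ε:ℂ)*w)‖ := by
          nlinarith [hlam0]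
  have hfin : ‖h w‖ ≤ lam * ‖w‖ + 0 := ge_of_tendsto hlim hev
  have hhw : g w - 1 = h w * w := by
    simp only [hh]; rw [div_mul_cancel₀ _ hw0]
  rw [hhw]
  rw [norm_mul]
  calc ‖h w‖ * ‖w‖ ≤ (lam * ‖w‖) * ‖w‖ := by
        apply mul_le_mul_of_nonneg_right _ (norm_nonneg w)
        simpa using hfin
    _ = lam * ‖w‖ ^ 2 := by
        ring
set_option maxHeartbeats 1000000 in
theorem stmt7 (f g : ℂ → ℂ) (lam : ℝ) (hlam : 0 < lam ∧ lam < 1)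
    (hf : AnalyticOn ℂ f (ball 0 1))
    (hf0 : f 0 = 0) (hf'0 : deriv f 0 = 1) (hf''0 : iteratedDeriv 2 f 0 = 0)
    (hg : AnalyticOn ℂ g (ball 0 1)) (hg0 : g 0 = 1)
    (hgf : ∀ z ∈ ball (0:ℂ) 1, g z * f z = z)
    (hU : ∀ z ∈ ball (0:ℂ) 1, z ≠ 0 →
      0 < ‖(g z) ^ 2 * deriv f z - 1‖ ∧
      ‖(g z) ^ 2 * deriv f z - 1‖ ≤ lam * ‖z‖ ^ 2)
    (F : ℂ → ℝ → ℂ)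
    (hF : ∀ (z : ℂ) (t : ℝ), F z t =
      z * f ((Real.exp (-t) : ℂ) * z) /
        (z - ((Real.exp t - Real.exp (-t) : ℝ) : ℂ) * f ((Real.exp (-t) : ℂ) * z)))
    (P : ℂ → ℝ → ℂ)
    (hP : ∀ (z : ℂ) (t : ℝ), P z t =
      deriv (fun s : ℝ => F z s) t / (z * deriv (fun w : ℂ => F w t) z)) :
    ∀ z ∈ ball (0:ℂ) 1, z ≠ 0 → ∀ t : ℝ, 0 ≤ t →
      ‖(P z t - 1) / (P z t + 1)‖ =
        Real.exp (2 * t) *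
          ‖(g ((Real.exp (-t) : ℂ) * z)) ^ 2 *
            deriv f ((Real.exp (-t) : ℂ) * z) - 1‖ ∧
      ‖(P z t - 1) / (P z t + 1)‖ ≤ lam * ‖z‖ ^ 2 ∧
      0 < (P z t).re := by
  have hlam0 : 0 ≤ lam := le_of_lt hlam.1
  have hf' : AnalyticOnNhd ℂ f (ball 0 1) := (isOpen_ball.analyticOn_iff_analyticOnNhd).1 hf
  have hgd0 : deriv g 0 = 0 := aux_g0 f g hf hg hf0 hf'0 hf''0 hg0 hgf
  have hbnd := aux_bnd f g lam hlam0 hf hg hg0 hgd0 hgf (fun z hz hz0 => (hU z hz hz0).2)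
  intro z hz hz0 t ht
  set r : ℝ := Real.exp (-t) with hr
  set et : ℝ := Real.exp t with het
  set E2 : ℝ := Real.exp (2*t) with hE2
  have hr0 : (0:ℝ) < r := Real.exp_pos _
  have het0 : (0:ℝ) < et := Real.exp_pos _
  have hE20 : (0:ℝ) < E2 := Real.exp_pos _
  have hr1 : r ≤ 1 := by
    rw [hr]; exact Real.exp_le_one_iff.mpr (by linarith)
  have hret : r * et = 1 := by rw [hr, het, ← Real.exp_add]; simp
  have hE2et : E2 = et * et := by rw [hE2, het, ← Real.exp_add]; ring_nf
  set rc : ℂ := ((r:ℝ):ℂ) with hrc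
  set w : ℂ := rc * z with hwdef
  have hretC : rc * ((et:ℝ):ℂ) = 1 := by
    rw [hrc, ← Complex.ofReal_mul, hret, Complex.ofReal_one]
  have hrc0 : rc ≠ 0 := Complex.ofReal_ne_zero.2 (ne_of_gt hr0)
  have hzb : ‖z‖ < 1 := by
    rw [mem_ball, dist_zero_right] at hz; exact hz
  have habsw : ‖w‖ = r * ‖z‖ := by
    rw [hwdef, norm_mul, hrc, Complex.norm_real, Real.norm_eq_abs, abs_of_pos hr0]
  have hwb : w ∈ ball (0:ℂ) 1 := by
    rw [mem_ball, dist_zero_right, habsw]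
    nlinarith [norm_nonneg z]
  have hw0 : w ≠ 0 := mul_ne_zero hrc0 hz0
  have hfd : DifferentiableAt ℂ f w := (hf' w hwb).differentiableAt
  have hgwA : g w * f w = w := hgf w hwb
  have hA0 : f w ≠ 0 := by
    intro hfx; rw [hfx, mul_zero] at hgwA; exact hw0 hgwA.symm
  have hUw := hU w hwb hw0
  have hlz : lam * ‖z‖ ^ 2 < 1 := by
    nlinarith [norm_nonneg z]
  set cc : ℂ := ((et:ℝ):ℂ) - rc with hcc
  set c2 : ℂ := ((et:ℝ):ℂ) + rc with hc2
  -- denominator nonzero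
  have hD0 : z - cc * f w ≠ 0 := by
    intro hD
    have hz_eq : z = cc * f w := by linear_combination hD
    have hgww : (g w - rc * cc) * f w = 0 := by
      have : g w * f w = rc * (cc * f w) := by rw [← hz_eq]; exact hgwA
      linear_combination this
    have hgwc : g w = rc * cc := by
      rcases mul_eq_zero.1 hgww with h' | h'
      · linear_combination h'
      · exact absurd h' hA0
    have hgm1 : g w - 1 = ((-(r^2) : ℝ) : ℂ) := by
      rw [hgwc, hcc]
      push_cast
      linear_combination hretC
    have habs1 : ‖g w - 1‖ = r^2 := by
      rw [hgm1, Complex.norm_real, Real.norm_eq_abs, abs_neg, abs_of_pos (by positivity)]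
    have hb := hbnd w hwb
    rw [habs1, habsw] at hb
    nlinarith [mul_pos hr0 hr0, hlz, norm_nonneg z]
  set K : ℂ := rc * z^2 * deriv f w - cc * (f w)^2 with hK
  have hK0 : K ≠ 0 := by
    intro hKz
    have hUA : (g w^2 * deriv f w - 1) * (f w)^2 = ((-(r^2) : ℝ) : ℂ) * (f w)^2 := by
      push_cast
      linear_combination (deriv f w) * (g w * f w + w) * hgwA + rc * hKz + (f w)^2 * hretC
    have hU_eq : g w^2 * deriv f w - 1 = ((-(r^2) : ℝ) : ℂ) :=
      mul_right_cancel₀ (pow_ne_zero 2 hA0) hUA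
    have habs1 : ‖g w^2 * deriv f w - 1‖ = r^2 := by
      rw [hU_eq, Complex.norm_real, Real.norm_eq_abs, abs_neg, abs_of_pos (by positivity)]
    have hb := hUw.2
    rw [habs1, habsw] at hb
    nlinarith [mul_pos hr0 hr0, hlz, norm_nonneg z]
  -- derivative in z
  have hfw : HasDerivAt f (deriv f w) w := hfd.hasDerivAt
  have hlin : HasDerivAt (fun v : ℂ => rc * v) rc z := by
    simpa using (hasDerivAt_id z).const_mul rc
  have hinner : HasDerivAt (fun v : ℂ => f (rc * v)) (deriv f w * rc) z := by
    have := hfw.comp z hlin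
    simpa [Function.comp_def] using this
  have hNum : HasDerivAt (fun v : ℂ => v * f (rc*v)) (1 * f w + z * (deriv f w * rc)) z :=
    (hasDerivAt_id z).mul hinner
  have hDen : HasDerivAt (fun v : ℂ => v - cc * f (rc*v)) (1 - cc * (deriv f w * rc)) z := by
    have := (hasDerivAt_id z).fun_sub (hinner.const_mul cc)
    simpa using this
  have hQz : HasDerivAt (fun v : ℂ => v * f (rc*v) / (v - cc * f (rc*v)))
      (((1 * f w + z * (deriv f w * rc)) * (z - cc * f w) -
        (z * f w) * (1 - cc * (deriv f w * rc))) / (z - cc * f w)^2) z :=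
    hNum.div hDen hD0
  have hfunz : (fun v => F v t) = (fun v : ℂ => v * f (rc*v) / (v - cc * f (rc*v))) := by
    funext v
    rw [hF v t, hcc, hrc, hr, het]
    push_cast
    ring_nf
  have hWval : deriv (fun v => F v t) z = K / (z - cc * f w)^2 := by
    rw [hfunz, hQz.deriv, hK]
    ring
  -- derivative in t
  have hexp_t : Complex.exp (-(t:ℂ)) = rc := by
    rw [hrc, hr, ← Complex.ofReal_neg, Complex.ofReal_exp]
  have hexp_t' : Complex.exp ((t:ℂ)) = ((et:ℝ):ℂ) := by
    rw [het, Complex.ofReal_exp]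
  have hmexp : HasDerivAt (fun u : ℂ => Complex.exp (-u)) (-rc) ((t:ℝ):ℂ) := by
    have h1 := (Complex.hasDerivAt_exp (-(t:ℂ))).comp ((t:ℝ):ℂ) ((hasDerivAt_id ((t:ℝ):ℂ)).neg)
    simp only [Function.comp_def] at h1
    rw [hexp_t] at h1
    simpa using h1
  have hphi : HasDerivAt (fun u : ℂ => Complex.exp (-u) * z) (-rc * z) ((t:ℝ):ℂ) :=
    hmexp.mul_const z
  have hphit : Complex.exp (-(t:ℂ)) * z = w := by rw [hexp_t, hwdef]
  have hfw' : HasDerivAt f (deriv f w) (Complex.exp (-(t:ℂ)) * z) := by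
    rw [hphit]; exact hfw
  have hfcomp : HasDerivAt (fun u : ℂ => f (Complex.exp (-u) * z))
      (deriv f w * (-rc * z)) ((t:ℝ):ℂ) := by
    have := hfw'.comp ((t:ℝ):ℂ) hphi
    simpa [Function.comp_def] using this
  have hnum_t : HasDerivAt (fun u : ℂ => z * f (Complex.exp (-u) * z))
      (z * (deriv f w * (-rc*z))) ((t:ℝ):ℂ) := hfcomp.const_mul z
  have hcfun : HasDerivAt (fun u : ℂ => Complex.exp u - Complex.exp (-u)) (c2) ((t:ℝ):ℂ) := by
    have := (Complex.hasDerivAt_exp ((t:ℝ):ℂ)).fun_sub hmexp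
    rw [hexp_t'] at this
    simpa [hc2, sub_neg_eq_add] using this
  have hden_t : HasDerivAt
      (fun u : ℂ => z - (Complex.exp u - Complex.exp (-u)) * f (Complex.exp (-u)*z))
      (0 - (c2 * f w + cc * (deriv f w * (-rc*z)))) ((t:ℝ):ℂ) := by
    have h2 := (hasDerivAt_const ((t:ℝ):ℂ) z).sub (hcfun.mul hfcomp)
    rw [hphit] at h2
    have h3 : Complex.exp ((t:ℝ):ℂ) - Complex.exp (-((t:ℝ):ℂ)) = cc := by
      rw [hexp_t, hexp_t', hcc]
    rw [h3] at h2
    exact h2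
  have hDent0 : z - (Complex.exp ((t:ℝ):ℂ) - Complex.exp (-((t:ℝ):ℂ))) *
      f (Complex.exp (-((t:ℝ):ℂ)) * z) ≠ 0 := by
    rw [hphit, hexp_t, hexp_t']
    rw [show ((et:ℝ):ℂ) - rc = cc from by rw [hcc]]
    exact hD0
  have hQt : HasDerivAt
      (fun u : ℂ => z * f (Complex.exp (-u) * z) /
        (z - (Complex.exp u - Complex.exp (-u)) * f (Complex.exp (-u)*z)))
      ((z * (deriv f w * (-rc*z)) *
          (z - (Complex.exp ((t:ℝ):ℂ) - Complex.exp (-((t:ℝ):ℂ))) * f (Complex.exp (-((t:ℝ):ℂ)) * z))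
        - (z * f (Complex.exp (-((t:ℝ):ℂ)) * z)) * (0 - (c2 * f w + cc * (deriv f w * (-rc*z)))))
        / (z - (Complex.exp ((t:ℝ):ℂ) - Complex.exp (-((t:ℝ):ℂ))) * f (Complex.exp (-((t:ℝ):ℂ)) * z))^2)
      ((t:ℝ):ℂ) := hnum_t.div hden_t hDent0
  have hfunt : (fun s : ℝ => F z s) = (fun s : ℝ =>
      z * f (Complex.exp (-((s:ℝ):ℂ)) * z) /
        (z - (Complex.exp ((s:ℝ):ℂ) - Complex.exp (-((s:ℝ):ℂ))) * f (Complex.exp (-((s:ℝ):ℂ))*z))) := by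
    funext s
    rw [hF z s]
    rw [show ((Real.exp (-s) : ℝ):ℂ) = Complex.exp (-((s:ℝ):ℂ)) from by
      rw [← Complex.ofReal_neg, Complex.ofReal_exp]]
    rw [show ((Real.exp s - Real.exp (-s) : ℝ):ℂ) = Complex.exp ((s:ℝ):ℂ) - Complex.exp (-((s:ℝ):ℂ)) from by
      push_cast [Complex.ofReal_exp]; ring]
  have hVval : deriv (fun s : ℝ => F z s) t =
      z * (c2 * (f w)^2 - rc * z^2 * deriv f w) / (z - cc * f w)^2 := by
    rw [hfunt]
    have := hQt.comp_ofReal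
    rw [this.deriv]
    rw [hphit, hexp_t, hexp_t', show ((et:ℝ):ℂ) - rc = cc from by rw [hcc]]
    ring
  -- value of P
  have hPval : P z t = (c2 * (f w)^2 - rc * z^2 * deriv f w) / K := by
    rw [hP z t, hVval, hWval]
    rw [div_eq_div_iff (by
        exact mul_ne_zero hz0 (div_ne_zero hK0 (pow_ne_zero 2 hD0))) hK0]
    field_simp
  have hgwA' : g w * f w = rc * z := hgwA
  have hgww : g w = rc * z / f w := by
    rw [eq_div_iff hA0]; exact hgwA'
  have hE2C : ((E2:ℝ):ℂ) = ((et:ℝ):ℂ) * ((et:ℝ):ℂ) := by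
    rw [hE2et]; push_cast; ring
  have hP1 : P z t + 1 = (2 * rc * (f w)^2) / K := by
    rw [hPval, div_add' _ _ _ hK0]
    congr 1
    rw [hK, hcc, hc2]; ring
  have hPm1 : P z t - 1 = (2*((et:ℝ):ℂ)*(f w)^2 - 2*rc*z^2*deriv f w) / K := by
    rw [hPval, div_sub' hK0]
    congr 1
    rw [hK, hcc, hc2]; ring
  have hP1ne : P z t + 1 ≠ 0 := by
    rw [hP1]
    exact div_ne_zero
      (mul_ne_zero (mul_ne_zero two_ne_zero hrc0) (pow_ne_zero 2 hA0)) hK0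
  have hQev : (P z t - 1)/(P z t + 1) = -(((E2:ℝ):ℂ) * ((g w)^2 * deriv f w - 1)) := by
    rw [hPm1, hP1, hgww, hE2C]
    field_simp
    linear_combination (-((et:ℝ):ℂ)*(f w)^2 +
      rc*z^2*(deriv f w)*(((et:ℝ):ℂ)*rc + 1)) * hretC
  have hc1 : ‖(P z t - 1)/(P z t + 1)‖ =
      E2 * ‖(g w)^2 * deriv f w - 1‖ := by
    rw [hQev]
    rw [norm_neg]
    rw [norm_mul, Complex.norm_real, Real.norm_eq_abs, abs_of_pos hE20]
  have hc2 : ‖(P z t - 1)/(P z t + 1)‖ ≤ lam * ‖z‖ ^ 2 := by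
    rw [hc1]
    have h8 := mul_le_mul_of_nonneg_left hUw.2 hE20.le
    have hE2r : E2 * r^2 = 1 := by
      rw [hE2et]; linear_combination (r*et + 1)*hret
    calc E2 * ‖(g w)^2 * deriv f w - 1‖
        ≤ E2 * (lam * ‖w‖ ^ 2) := h8
      _ = lam * ‖z‖ ^ 2 := by
          rw [habsw]
          linear_combination (lam * ‖z‖ ^ 2) * hE2r
  refine ⟨hc1, hc2, ?_⟩
  have hlt1 : ‖(P z t - 1)/(P z t + 1)‖ < 1 := lt_of_le_of_lt hc2 hlz
  have habsP : ‖P z t - 1‖ < ‖P z t + 1‖ := by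
    have h5 : P z t - 1 = ((P z t - 1)/(P z t + 1)) * (P z t + 1) :=
      (div_mul_cancel₀ _ hP1ne).symm
    rw [h5, norm_mul]
    have h6 : 0 < ‖P z t + 1‖ := norm_pos_iff.2 hP1ne
    exact mul_lt_of_lt_one_left h6 hlt1
  have hre : Complex.normSq (P z t + 1) - Complex.normSq (P z t - 1) = 4 * (P z t).re := by
    simp only [Complex.normSq_apply, Complex.add_re, Complex.sub_re, Complex.add_im,
      Complex.sub_im, Complex.one_re, Complex.one_im]
    ring
  have h7 : Complex.normSq (P z t - 1) < Complex.normSq (P z t + 1) := by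
    rw [← Complex.sq_norm, ← Complex.sq_norm]
    exact pow_lt_pow_left₀ habsP (norm_nonneg _) two_ne_zero
  linarith
end

section
/- Let f be analytic on D with f(0)=0, f'(0)=1, and |U_f(z)| ≤ λ|z|^2 on D for some λ ∈ (0,1). Then for every t ≥ 0 and z ∈ D, z^2 f'(e^{-t}z) e^{-t} - (e^t - e^{-t}) f(e^{-t}z)^2 ≠ 0 whenever z ≠ 0. (Equivalently, the denominator of the Herglotz function of Becker's chain does not vanish in D.) -/
/-! Write `w = e z` with `e = e^{-t}`. If the denominator vanished at `z ≠ 0`, then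
multiplying the vanishing identity by `e` turns it into `w² f'(w) = (1 - e²) f(w)²`, i.e.
`U_f(w) = g(w)² f'(w) - 1 = -e²`. Hence `e² = |U_f(w)| ≤ λ e² |z|² < e²`. -/

open Complex Metric Set

lemma sq_mul_sub_one_eq_neg_sq_of_denominator_eq_zero {g F F' e z : ℂ}
    (hgF : g * F = e * z) (he : e ≠ 0) (hz : z ≠ 0)
    (hden : z ^ 2 * F' * e - (e⁻¹ - e) * F ^ 2 = 0) :
    g ^ 2 * F' - 1 = -e ^ 2 := by
  have hF : F ≠ 0 := by
    rintro rfl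
    exact mul_ne_zero he hz (by simpa using hgF.symm)
  apply mul_right_cancel₀ (pow_ne_zero 2 hF)
  linear_combination (g * F + e * z) * F' * hgF + e * hden + F ^ 2 * mul_inv_cancel₀ he

lemma not_norm_sq_le_mul_norm_mul_sq {e z : ℂ} {lam : ℝ} (hlam : lam < 1) (he : e ≠ 0)
    (hz : ‖z‖ < 1) : ¬ ‖e‖ ^ 2 ≤ lam * ‖e * z‖ ^ 2 := by
  have he2 : 0 < ‖e‖ ^ 2 := by positivity
  have hlamz : lam * ‖z‖ ^ 2 < 1 := by
    have hz2 : ‖z‖ ^ 2 < 1 := by nlinarith [norm_nonneg z]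
    nlinarith [sq_nonneg ‖z‖]
  rw [norm_mul, mul_pow]
  nlinarith

theorem stmt8_general (f g : ℂ → ℂ) (lam : ℝ) (hlam : 0 < lam ∧ lam < 1)
    (hgf : ∀ z ∈ ball (0:ℂ) 1, g z * f z = z)
    (hU : ∀ z ∈ ball (0:ℂ) 1,
      ‖(g z) ^ 2 * deriv f z - 1‖ ≤ lam * ‖z‖ ^ 2) :
    ∀ t : ℝ, 0 ≤ t → ∀ z ∈ ball (0:ℂ) 1, z ≠ 0 →
      z ^ 2 * deriv f ((Real.exp (-t) : ℂ) * z) * (Real.exp (-t) : ℂ) -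
        ((Real.exp t - Real.exp (-t) : ℝ) : ℂ) * (f ((Real.exp (-t) : ℂ) * z)) ^ 2 ≠ 0 := by
  intro t ht z hz hz0 hden
  set e : ℂ := (Real.exp (-t) : ℂ)
  have he : e ≠ 0 := ofReal_ne_zero.mpr (Real.exp_pos _).ne'
  have hz1 : ‖z‖ < 1 := mem_ball_zero_iff.mp hz
  have hw : e * z ∈ ball (0:ℂ) 1 := by
    have hnorm_e : ‖e‖ ≤ 1 := by
      rw [norm_real, Real.norm_of_nonneg (Real.exp_pos _).le]
      exact Real.exp_le_one_iff.mpr (by linarith)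
    rw [mem_ball_zero_iff, norm_mul]
    nlinarith [norm_nonneg z]
  have hcoef : ((Real.exp t - Real.exp (-t) : ℝ) : ℂ) = e⁻¹ - e := by
    simp only [e, Real.exp_neg, ofReal_sub, ofReal_inv, inv_inv]
  rw [hcoef] at hden
  have hUw := hU _ hw
  rw [sq_mul_sub_one_eq_neg_sq_of_denominator_eq_zero (hgf _ hw) he hz0 hden, norm_neg,
    norm_pow] at hUw
  exact not_norm_sq_le_mul_norm_mul_sq hlam.2 he hz1 hUw

theorem stmt8 (f g : ℂ → ℂ) (lam : ℝ) (hlam : 0 < lam ∧ lam < 1)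
    (hf : AnalyticOn ℂ f (ball 0 1))
    (hf0 : f 0 = 0) (hf'0 : deriv f 0 = 1)
    (hg : AnalyticOn ℂ g (ball 0 1)) (hg0 : g 0 = 1)
    (hgf : ∀ z ∈ ball (0:ℂ) 1, g z * f z = z)
    (hU : ∀ z ∈ ball (0:ℂ) 1,
      ‖(g z) ^ 2 * deriv f z - 1‖ ≤ lam * ‖z‖ ^ 2) :
    ∀ t : ℝ, 0 ≤ t → ∀ z ∈ ball (0:ℂ) 1, z ≠ 0 →
      z ^ 2 * deriv f ((Real.exp (-t) : ℂ) * z) * (Real.exp (-t) : ℂ) -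
        ((Real.exp t - Real.exp (-t) : ℝ) : ℂ) * (f ((Real.exp (-t) : ℂ) * z)) ^ 2 ≠ 0 :=
  stmt8_general f g lam hlam hgf hU
end

section
/- Let f be analytic on D with f(0)=0, f'(0)=1, f''(0)=0, and write a_3 = f'''(0)/6. Define f(z,t) = z f(e^{-t}z)/(z - (e^t - e^{-t}) f(e^{-t}z)). Then e^{-t} f(z,t) → z/(1 - a_3 z^2) as t → ∞, locally uniformly in z on a neighborhood of 0, and f(z,0) = f(z), f(0,t) = 0, ∂f/∂z(0,t) = e^t for all t ≥ 0. -/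
/-!
Taylor's theorem with the normalisation `f(0) = 0`, `f'(0) = 1`, `f''(0) = 0` gives
`f w = w + w³ g(w)` with `g` continuous at `0` and `g(0) = a₃`. Substituting this into the
definition of `f(z, t)` and cancelling `ε² z`, where `ε = e^{-t}`, yields
`e^{-t} f(z, t) = z (1 + ε² z² g(εz)) / (1 - (1 - ε²) z² g(εz))`. The right-hand side is jointly
continuous in `(ε, z)` wherever `g` is continuous at `εz` and the denominator is nonzero; at `ε = 0`
it is `z / (1 - a₃ z²)`, and joint continuity turns `ε → 0` into locally uniform convergence in `z`.
The right-hand side is also `z` times a function continuous at `z = 0` with value `1` there,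
which gives `∂f/∂z(0, t) = e^t`.
-/

open Complex Metric Set Filter Topology

theorem AnalyticAt.exists_eq_add_pow_three_mul {𝕜 : Type*} [NontriviallyNormedField 𝕜]
    [CharZero 𝕜] [CompleteSpace 𝕜] {f : 𝕜 → 𝕜} (hf : AnalyticAt 𝕜 f 0)
    (hf0 : f 0 = 0) (hf'0 : deriv f 0 = 1) (hf''0 : iteratedDeriv 2 f 0 = 0) :
    ∃ g : 𝕜 → 𝕜, ContinuousAt g 0 ∧ g 0 = iteratedDeriv 3 f 0 / 6 ∧
      ∀ w, f w = w + w ^ 3 * g w := by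
  obtain ⟨G, hG, hfG⟩ := hf.exists_eq_sum_add_pow_mul 4
  refine ⟨fun w => iteratedDeriv 3 f 0 / 6 + w * G w, by fun_prop, by simp, fun w => ?_⟩
  rw [hfG w]
  simp [Finset.sum_range_succ, hf0, hf'0, hf''0, Nat.factorial]
  ring

theorem hasDerivAt_sub_smul_of_continuousAt {𝕜 E : Type*} [NontriviallyNormedField 𝕜]
    [NormedAddCommGroup E] [NormedSpace 𝕜 E] {u : 𝕜 → E} {x : 𝕜} (hu : ContinuousAt u x) :
    HasDerivAt (fun z => (z - x) • u z) (u x) x := by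
  rw [hasDerivAt_iff_tendsto_slope_zero]
  have hshift : Tendsto (fun t : 𝕜 => x + t) (𝓝[≠] 0) (𝓝 x) :=
    tendsto_nhdsWithin_of_tendsto_nhds (by simpa using (continuous_const_add x).tendsto 0)
  refine (hu.tendsto.comp hshift).congr' ?_
  filter_upwards [self_mem_nhdsWithin] with t (ht : t ≠ 0)
  simp [smul_smul, inv_mul_cancel₀ ht]

theorem tendstoLocallyUniformlyOn_of_continuousAt_uncurry {ι α β γ : Type*}
    [TopologicalSpace α] [TopologicalSpace β] [UniformSpace γ] {Φ : α → β → γ} {l : Filter ι}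
    {ε : ι → α} {a : α} {s : Set β} (hε : Tendsto ε l (𝓝 a))
    (hΦ : ∀ x ∈ s, ContinuousAt ↿Φ (a, x)) :
    TendstoLocallyUniformlyOn (fun i => Φ (ε i)) (Φ a) l s := by
  refine tendstoLocallyUniformlyOn_iff_forall_tendsto.2 fun x hx => ?_
  have hsnd : Tendsto (fun y : ι × β => y.2) (l ×ˢ 𝓝[s] x) (𝓝 x) :=
    tendsto_snd.mono_right nhdsWithin_le_nhds
  have hlim : Tendsto (fun y : ι × β => (Φ a y.2, Φ (ε y.1) y.2)) (l ×ˢ 𝓝[s] x)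
      (𝓝 (Φ a x, Φ a x)) :=
    ((hΦ x hx).tendsto.comp (tendsto_const_nhds.prodMk_nhds hsnd)).prodMk_nhds
      ((hΦ x hx).tendsto.comp ((hε.comp tendsto_fst).prodMk_nhds hsnd))
  exact hlim.mono_right (nhds_le_uniformity _)

section ChainFactor

variable {𝕜 : Type*}

def chainFactor [Field 𝕜] (g : 𝕜 → 𝕜) (ε z : 𝕜) : 𝕜 :=
  (1 + ε ^ 2 * z ^ 2 * g (ε * z)) / (1 - (1 - ε ^ 2) * z ^ 2 * g (ε * z))

theorem mul_div_sub_eq_mul_chainFactor [Field 𝕜] {f g : 𝕜 → 𝕜}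
    (hfg : ∀ w, f w = w + w ^ 3 * g w) {ε : 𝕜} (hε : ε ≠ 0) (z : 𝕜) :
    ε * (z * f (ε * z) / (z - (ε⁻¹ - ε) * f (ε * z))) = z * chainFactor g ε z := by
  rcases eq_or_ne z 0 with rfl | hz
  · simp
  have hnum : ε * (z * f (ε * z)) = ε ^ 2 * z * (z * (1 + ε ^ 2 * z ^ 2 * g (ε * z))) := by
    rw [hfg]; ring
  have hden : z - (ε⁻¹ - ε) * f (ε * z) =
      ε ^ 2 * z * (1 - (1 - ε ^ 2) * z ^ 2 * g (ε * z)) := by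
    rw [hfg]; field_simp; ring
  rw [← mul_div_assoc, hnum, hden, mul_div_mul_left _ _ (by positivity), chainFactor,
    mul_div_assoc]

theorem continuousAt_uncurry_chainFactor [NormedField 𝕜] {g : 𝕜 → 𝕜} {ε z : 𝕜}
    (hg : ContinuousAt g (ε * z)) (hden : 1 - (1 - ε ^ 2) * z ^ 2 * g (ε * z) ≠ 0) :
    ContinuousAt ↿(chainFactor g) (ε, z) := by
  have hgε : ContinuousAt (fun q : 𝕜 × 𝕜 => g (q.1 * q.2)) (ε, z) :=
    hg.comp (f := fun q : 𝕜 × 𝕜 => q.1 * q.2) (by fun_prop)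
  exact ContinuousAt.div (by fun_prop) (by fun_prop) hden

theorem chainFactor_one [Field 𝕜] (g : 𝕜 → 𝕜) (z : 𝕜) :
    chainFactor g 1 z = 1 + z ^ 2 * g z := by
  simp [chainFactor]

theorem hasDerivAt_mul_chainFactor [NontriviallyNormedField 𝕜] {g : 𝕜 → 𝕜}
    (hg : ContinuousAt g 0) (ε : 𝕜) :
    HasDerivAt (fun z => z * chainFactor g ε z) 1 0 := by
  have hcont : ContinuousAt (chainFactor g ε) 0 :=
    (continuousAt_uncurry_chainFactor (by simpa using hg) (by simp)).comp
      (Continuous.prodMk_right ε).continuousAt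
  simpa [chainFactor] using hasDerivAt_sub_smul_of_continuousAt hcont

theorem tendstoLocallyUniformlyOn_mul_chainFactor [NormedField 𝕜] {ι : Type*} {g : 𝕜 → 𝕜}
    (hg : ContinuousAt g 0) {l : Filter ι} {ε : ι → 𝕜} (hε : Tendsto ε l (𝓝 0)) :
    TendstoLocallyUniformlyOn (fun i z => z * chainFactor g (ε i) z)
      (fun z => z / (1 - g 0 * z ^ 2)) l {z | 1 - g 0 * z ^ 2 ≠ 0} := by
  have hlimit : (fun z => z * chainFactor g 0 z) = fun z => z / (1 - g 0 * z ^ 2) := by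
    ext z
    simp [chainFactor, div_eq_mul_inv, mul_comm]
  rw [← hlimit]
  exact tendstoLocallyUniformlyOn_of_continuousAt_uncurry (Φ := fun ε z => z * chainFactor g ε z)
    hε fun x hx => continuousAt_snd.mul
      (continuousAt_uncurry_chainFactor (by simpa using hg) (by simpa [mul_comm] using hx))

end ChainFactor

theorem stmt9 (f : ℂ → ℂ)
    (hf : AnalyticOn ℂ f (ball 0 1))
    (hf0 : f 0 = 0) (hf'0 : deriv f 0 = 1) (hf''0 : iteratedDeriv 2 f 0 = 0)
    (F : ℂ → ℝ → ℂ)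
    (hF : ∀ (z : ℂ) (t : ℝ), F z t =
      z * f ((Real.exp (-t) : ℂ) * z) /
        (z - ((Real.exp t - Real.exp (-t) : ℝ) : ℂ) * f ((Real.exp (-t) : ℂ) * z))) :
    (∀ z ∈ ball (0:ℂ) 1, F z 0 = f z) ∧
    (∀ t : ℝ, F 0 t = 0) ∧
    (∀ t : ℝ, 0 ≤ t → deriv (fun w : ℂ => F w t) 0 = Real.exp t) ∧
    (∃ s ∈ nhds (0 : ℂ),
      TendstoLocallyUniformlyOn (fun (t : ℝ) (z : ℂ) => (Real.exp (-t) : ℂ) * F z t)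
        (fun z : ℂ => z / (1 - (iteratedDeriv 3 f 0 / 6) * z ^ 2)) atTop s) := by
  obtain ⟨g, hg, hg0, hfg⟩ :=
    (hf.analyticAt (ball_mem_nhds 0 one_pos)).exists_eq_add_pow_three_mul hf0 hf'0 hf''0
  have hscaled (z : ℂ) (t : ℝ) :
      (Real.exp (-t) : ℂ) * F z t = z * chainFactor g (Real.exp (-t)) z := by
    rw [hF, ← mul_div_sub_eq_mul_chainFactor hfg (by exact_mod_cast (Real.exp_pos _).ne')]
    push_cast [Real.exp_neg]
    rw [inv_inv]
  refine ⟨fun z _ => ?_, fun t => by simp [hF], fun t _ => ?_,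
    ⟨{z | 1 - g 0 * z ^ 2 ≠ 0}, ContinuousAt.eventually_ne (by fun_prop) (by simp), ?_⟩⟩
  · have h0 := hscaled z 0
    rw [neg_zero, Real.exp_zero, ofReal_one, one_mul, chainFactor_one] at h0
    rw [h0, hfg]
    ring
  · have hFt : (fun w => F w t) =
        fun w => (Real.exp t : ℂ) * (w * chainFactor g (Real.exp (-t)) w) := by
      ext w
      rw [← hscaled, ← mul_assoc, ← ofReal_mul, ← Real.exp_add, add_neg_cancel, Real.exp_zero,
        ofReal_one, one_mul]
    rw [hFt, ((hasDerivAt_mul_chainFactor hg _).const_mul _).deriv, mul_one]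
  · have hε : Tendsto (fun t : ℝ => (Real.exp (-t) : ℂ)) atTop (𝓝 0) := by
      simpa only [ofReal_zero, Function.comp_def] using
        (continuous_ofReal.tendsto 0).comp Real.tendsto_exp_neg_atTop_nhds_zero
    simp_rw [hscaled, ← hg0]
    exact tendstoLocallyUniformlyOn_mul_chainFactor hg hε
end

section
/- Let g be analytic on D* = {ζ : |ζ| > 1} with expansion g(ζ) = ζ + b_0 + b_1 ζ^{-1} + ⋯ (i.e., g(ζ) - ζ is bounded and analytic on D*, tending to b_0 at ∞), and suppose |U_g(ζ)| ≤ k for all ζ ∈ D*, where k ∈ (0,1) and U_g(ζ) = (ζ/g(ζ))^2 g'(ζ) - 1. Then g(ζ) ≠ 0 for all ζ ∈ D* and, setting f(z) = 1/g(1/z) for z ∈ D \ {0} and f(0)=0, f is analytic on D with f(0)=0, f'(0)=1, and f'(z) - 1 = U_g(1/z) for all z ∈ D \ {0}; in particular |f'(z) - 1| ≤ k on D. -/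
/-!
Nonvanishing of `g` is forced by the bound on `U_g`: at a zero of `g` the quantity
`(ζ / g ζ) ^ 2 * g' ζ - 1` would be `-1`. Writing `g ζ = ζ + h (1 / ζ)`, the function
`f z = 1 / g (1 / z)` equals `z / (1 + z h(z))` on the disc, which is analytic there with
`f'(0) = 1`; away from `0` the chain rule gives `f'(z) = U_g(1 / z) + 1`.
-/

open Metric Set Filter Topology

lemma one_lt_norm_inv_of_mem_ball {𝕜 : Type*} [NormedDivisionRing 𝕜] {z : 𝕜}
    (hz : z ∈ ball (0 : 𝕜) 1) (hz0 : z ≠ 0) : 1 < ‖z⁻¹‖ := by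
  rw [norm_inv]
  exact (one_lt_inv₀ (norm_pos_iff.2 hz0)).2 (mem_ball_zero_iff.1 hz)

lemma ne_zero_of_norm_div_sq_mul_sub_one_le {𝕜 : Type*} [NormedField 𝕜] {ζ w d : 𝕜} {k : ℝ}
    (hk : k < 1) (h : ‖(ζ / w) ^ 2 * d - 1‖ ≤ k) : w ≠ 0 := by
  rintro rfl
  simp only [div_zero, ne_eq, OfNat.ofNat_ne_zero, not_false_eq_true, zero_pow, zero_mul,
    zero_sub, norm_neg, norm_one] at h
  linarith

lemma HasDerivAt.inv_comp_inv {𝕜 : Type*} [NontriviallyNormedField 𝕜] {g : 𝕜 → 𝕜} {g' z : 𝕜}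
    (hg : HasDerivAt g g' z⁻¹) (hgz : g z⁻¹ ≠ 0) (hz : z ≠ 0) :
    HasDerivAt (fun w => (g w⁻¹)⁻¹) ((z⁻¹ / g z⁻¹) ^ 2 * g') z := by
  refine ((hg.comp z (hasDerivAt_inv hz)).fun_inv hgz).congr_deriv ?_
  simp only [Function.comp_apply]
  field_simp

lemma hasDerivAt_mul_inv_one_add_mul_at_zero {𝕜 : Type*} [NontriviallyNormedField 𝕜]
    {h : 𝕜 → 𝕜} (hh : DifferentiableAt 𝕜 h 0) :
    HasDerivAt (fun z => z * (1 + z * h z)⁻¹) 1 0 := by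
  have hden : HasDerivAt (fun z => 1 + z * h z) (h 0) 0 := by
    simpa using ((hasDerivAt_id' (0 : 𝕜)).fun_mul hh.hasDerivAt).const_add 1
  simpa using (hasDerivAt_id' (0 : 𝕜)).fun_mul (hden.fun_inv (by simp))

section Expansion

variable {g h : ℂ → ℂ}

lemma inv_apply_inv_eq_of_expansion (hexp : ∀ ζ : ℂ, 1 < ‖ζ‖ → g ζ = ζ + h (1 / ζ))
    {z : ℂ} (hz : z ∈ ball (0 : ℂ) 1) (hz0 : z ≠ 0) :
    (g z⁻¹)⁻¹ = z * (1 + z * h z)⁻¹ := by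
  rw [hexp _ (one_lt_norm_inv_of_mem_ball hz hz0), one_div, inv_inv,
    show z⁻¹ + h z = (1 + z * h z) / z by field_simp, inv_div, div_eq_mul_inv]

lemma one_add_mul_ne_zero_of_expansion (hexp : ∀ ζ : ℂ, 1 < ‖ζ‖ → g ζ = ζ + h (1 / ζ))
    (hg0 : ∀ ζ : ℂ, 1 < ‖ζ‖ → g ζ ≠ 0) {z : ℂ} (hz : z ∈ ball (0 : ℂ) 1) :
    1 + z * h z ≠ 0 := by
  rcases eq_or_ne z 0 with rfl | hz0
  · simp
  · have hinv := inv_ne_zero (hg0 _ (one_lt_norm_inv_of_mem_ball hz hz0))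
    rw [inv_apply_inv_eq_of_expansion hexp hz hz0] at hinv
    simpa using right_ne_zero_of_mul hinv

lemma eqOn_ball_of_expansion (hexp : ∀ ζ : ℂ, 1 < ‖ζ‖ → g ζ = ζ + h (1 / ζ)) {f : ℂ → ℂ}
    (hfdef : ∀ z : ℂ, f z = if z = 0 then 0 else 1 / g (1 / z)) :
    EqOn f (fun z => z * (1 + z * h z)⁻¹) (ball 0 1) := by
  intro z hz
  rcases eq_or_ne z 0 with rfl | hz0
  · simp [hfdef]
  · rw [hfdef, if_neg hz0, one_div, one_div, inv_apply_inv_eq_of_expansion hexp hz hz0]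

end Expansion

theorem stmt10_general (g h : ℂ → ℂ) (k : ℝ) (hk : 0 < k ∧ k < 1)
    (hg : AnalyticOn ℂ g {ζ : ℂ | 1 < ‖ζ‖})
    (hh : AnalyticOn ℂ h (ball 0 1))
    (hexp : ∀ ζ : ℂ, 1 < ‖ζ‖ → g ζ = ζ + h (1 / ζ))
    (hU : ∀ ζ : ℂ, 1 < ‖ζ‖ →
      ‖(ζ / g ζ) ^ 2 * deriv g ζ - 1‖ ≤ k)
    (f : ℂ → ℂ)
    (hfdef : ∀ z : ℂ, f z = if z = 0 then 0 else 1 / g (1 / z)) :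
    (∀ ζ : ℂ, 1 < ‖ζ‖ → g ζ ≠ 0) ∧
    AnalyticOn ℂ f (ball 0 1) ∧
    f 0 = 0 ∧ deriv f 0 = 1 ∧
    (∀ z ∈ ball (0:ℂ) 1, z ≠ 0 →
      deriv f z - 1 = ((1 / z) / g (1 / z)) ^ 2 * deriv g (1 / z) - 1) ∧
    (∀ z ∈ ball (0:ℂ) 1, ‖deriv f z - 1‖ ≤ k) := by
  have hg0 : ∀ ζ : ℂ, 1 < ‖ζ‖ → g ζ ≠ 0 := fun ζ hζ =>
    ne_zero_of_norm_div_sq_mul_sub_one_le hk.2 (hU ζ hζ)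
  have hf_nhds : ∀ z ∈ ball (0 : ℂ) 1, f =ᶠ[𝓝 z] fun z => z * (1 + z * h z)⁻¹ :=
    fun z hz => eventuallyEq_of_mem (isOpen_ball.mem_nhds hz) (eqOn_ball_of_expansion hexp hfdef)
  have hh' := isOpen_ball.analyticOn_iff_analyticOnNhd.1 hh
  have hf_analytic : AnalyticOnNhd ℂ f (ball 0 1) := fun z hz =>
    (analyticAt_id.mul ((analyticAt_const.add (analyticAt_id.mul (hh' z hz))).inv
      (one_add_mul_ne_zero_of_expansion hexp hg0 hz))).congr (hf_nhds z hz).symm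
  have hf_deriv0 : HasDerivAt f 1 0 :=
    (hasDerivAt_mul_inv_one_add_mul_at_zero (hh' 0 (mem_ball_self one_pos)).differentiableAt)
      |>.congr_of_eventuallyEq (hf_nhds 0 (mem_ball_self one_pos))
  have hf_deriv : ∀ z ∈ ball (0 : ℂ) 1, z ≠ 0 →
      deriv f z = ((1 / z) / g (1 / z)) ^ 2 * deriv g (1 / z) := by
    intro z hz hz0
    have hζ := one_lt_norm_inv_of_mem_ball hz hz0
    have hgd : HasDerivAt g (deriv g z⁻¹) z⁻¹ :=
      (hg.differentiableOn.differentiableAt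
        ((isOpen_lt continuous_const continuous_norm).mem_nhds hζ)).hasDerivAt
    rw [one_div, ((hgd.inv_comp_inv (hg0 _ hζ) hz0).congr_of_eventuallyEq
      ((eventually_ne_nhds hz0).mono fun w hw => by rw [hfdef, if_neg hw, one_div, one_div])).deriv]
  refine ⟨hg0, hf_analytic.analyticOn, by simp [hfdef], hf_deriv0.deriv,
    fun z hz hz0 => by rw [hf_deriv z hz hz0], fun z hz => ?_⟩
  rcases eq_or_ne z 0 with rfl | hz0
  · simpa [hf_deriv0.deriv] using hk.1.le
  · rw [hf_deriv z hz hz0]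
    exact hU _ (by simpa only [one_div] using one_lt_norm_inv_of_mem_ball hz hz0)

theorem stmt10 (g h : ℂ → ℂ) (b0 : ℂ) (k : ℝ) (hk : 0 < k ∧ k < 1)
    (hg : AnalyticOn ℂ g {ζ : ℂ | 1 < ‖ζ‖})
    (hh : AnalyticOn ℂ h (ball 0 1)) (hh0 : h 0 = b0)
    (hexp : ∀ ζ : ℂ, 1 < ‖ζ‖ → g ζ = ζ + h (1 / ζ))
    (hU : ∀ ζ : ℂ, 1 < ‖ζ‖ →
      ‖(ζ / g ζ) ^ 2 * deriv g ζ - 1‖ ≤ k)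
    (f : ℂ → ℂ)
    (hfdef : ∀ z : ℂ, f z = if z = 0 then 0 else 1 / g (1 / z)) :
    (∀ ζ : ℂ, 1 < ‖ζ‖ → g ζ ≠ 0) ∧
    AnalyticOn ℂ f (ball 0 1) ∧
    f 0 = 0 ∧ deriv f 0 = 1 ∧
    (∀ z ∈ ball (0:ℂ) 1, z ≠ 0 →
      deriv f z - 1 = ((1 / z) / g (1 / z)) ^ 2 * deriv g (1 / z) - 1) ∧
    (∀ z ∈ ball (0:ℂ) 1, ‖deriv f z - 1‖ ≤ k) :=
  stmt10_general g h k hk hg hh hexp hU f hfdef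
end

section
/- Let f be analytic on D with f(0)=0 and |f'(z)+1| ≤ k on D for some k ∈ (0,1). Define f(z,t) = f(e^{-t}z) - z(e^t - e^{-t}) for z ∈ D, t ≥ 0, and p(z,t) = (∂f/∂t)(z,t)/(z (∂f/∂z)(z,t)). Then for all z ∈ D \ {0} and t ≥ 0: (i) the denominator z·∂f/∂z(z,t) = z(f'(e^{-t}z)e^{-t} - (e^t - e^{-t})) is nonzero; (ii) |(p(z,t)-1)/(p(z,t)+1)| = e^{-2t}|f'(e^{-t}z)+1| ≤ k < 1; (iii) hence Re p(z,t) > 0. -/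
open Complex Metric Set

/-!
Write `b = f'(e^{-t} z) + 1` and `E = e^{2t}`. Both partial derivatives of
`f(e^{-t} z) - z (e^t - e^{-t})` carry the factor `e^{-t}`:
`∂ₜ = -e^{-t} z (E + b)` and `∂_z = e^{-t} (b - E)`. Hence `p = (E + b) / (E - b)`,
whose Cayley transform `(p - 1) / (p + 1)` is `b / E`, and `‖b‖ ≤ k < 1 ≤ E`.
-/

lemma cayley_sub_one_div_add_one {b r : ℂ} (hrb : r - b ≠ 0) :
    ((r + b) / (r - b) - 1) / ((r + b) / (r - b) + 1) = b / r := by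
  rw [div_sub_one hrb, div_add_one hrb, div_div_div_cancel_right₀ hrb,
    show r + b - (r - b) = 2 * b by ring, show r + b + (r - b) = 2 * r by ring,
    mul_div_mul_left _ _ two_ne_zero]

lemma ofReal_sub_ne_zero_of_norm_lt {b : ℂ} {r : ℝ} (h : ‖b‖ < r) : (r : ℂ) - b ≠ 0 := by
  rw [sub_ne_zero]
  rintro rfl
  rw [norm_real, Real.norm_eq_abs] at h
  exact (le_abs_self r).not_gt h

lemma re_cayley_pos {b : ℂ} {r : ℝ} (h : ‖b‖ < r) : 0 < (((r : ℂ) + b) / (r - b)).re := by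
  have hb : b.re * b.re + b.im * b.im < r ^ 2 := by
    rw [← normSq_apply, ← Complex.sq_norm]
    exact pow_lt_pow_left₀ h (norm_nonneg b) two_ne_zero
  rw [div_re]
  simp only [add_re, sub_re, add_im, sub_im, ofReal_re, ofReal_im]
  rw [← add_div]
  exact div_pos (by nlinarith) (normSq_pos.mpr (ofReal_sub_ne_zero_of_norm_lt h))

lemma exp_eq_exp_neg_mul_exp_two_mul (t : ℝ) :
    Real.exp t = Real.exp (-t) * Real.exp (2 * t) := by
  rw [← Real.exp_add]
  ring_nf

lemma mul_exp_neg_sub_eq (a : ℂ) (t : ℝ) :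
    a * Real.exp (-t) - ((Real.exp t - Real.exp (-t) : ℝ) : ℂ) =
      Real.exp (-t) * (a + 1 - Real.exp (2 * t)) := by
  rw [exp_eq_exp_neg_mul_exp_two_mul t]
  push_cast
  ring

lemma exp_neg_mul_mem_ball {z : ℂ} {t : ℝ} (hz : z ∈ ball (0 : ℂ) 1) (ht : 0 ≤ t) :
    (Real.exp (-t) : ℂ) * z ∈ ball (0 : ℂ) 1 := by
  rw [mem_ball_zero_iff] at hz ⊢
  rw [norm_mul, norm_real, Real.norm_of_nonneg (Real.exp_pos _).le]
  calc Real.exp (-t) * ‖z‖ ≤ 1 * ‖z‖ := by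
        gcongr
        exact Real.exp_le_one_iff.mpr (by linarith)
    _ < 1 := by rwa [one_mul]

noncomputable def loewnerFamily (f : ℂ → ℂ) (z : ℂ) (t : ℝ) : ℂ :=
  f (Real.exp (-t) * z) - z * ((Real.exp t - Real.exp (-t) : ℝ) : ℂ)

section LoewnerFamily

variable {f : ℂ → ℂ} {z : ℂ} {t : ℝ}

lemma hasDerivAt_loewnerFamily_time (hf : DifferentiableAt ℂ f (Real.exp (-t) * z)) :
    HasDerivAt (loewnerFamily f z)
      (-(Real.exp (-t) * z) * (Real.exp (2 * t) + (deriv f (Real.exp (-t) * z) + 1))) t := by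
  have hexp : HasDerivAt (fun s : ℝ => Real.exp (-s)) (-Real.exp (-t)) t := by
    simpa using (hasDerivAt_neg t).exp
  have hflow := hf.hasDerivAt.scomp t (hexp.ofReal_comp.mul_const z)
  have hsinh := ((Real.hasDerivAt_exp t).sub hexp).ofReal_comp.const_mul z
  refine (hflow.sub hsinh).congr_deriv ?_
  rw [exp_eq_exp_neg_mul_exp_two_mul t, smul_eq_mul]
  push_cast
  ring

lemma hasDerivAt_loewnerFamily_space (hf : DifferentiableAt ℂ f (Real.exp (-t) * z)) :
    HasDerivAt (fun w => loewnerFamily f w t)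
      (deriv f (Real.exp (-t) * z) * Real.exp (-t) - ((Real.exp t - Real.exp (-t) : ℝ) : ℂ)) z :=
  ((hf.hasDerivAt.comp z ((hasDerivAt_id z).const_mul _)).sub
    (hasDerivAt_mul_const _)).congr_deriv (by simp)

end LoewnerFamily

theorem stmt13_general (f : ℂ → ℂ) (k : ℝ) (hk : 0 < k ∧ k < 1)
    (hf : AnalyticOn ℂ f (ball 0 1))
    (hf' : ∀ z ∈ ball (0:ℂ) 1, ‖deriv f z + 1‖ ≤ k)
    (F : ℂ → ℝ → ℂ)
    (hF : ∀ (z : ℂ) (t : ℝ), F z t =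
      f ((Real.exp (-t) : ℂ) * z) - z * ((Real.exp t - Real.exp (-t) : ℝ) : ℂ))
    (P : ℂ → ℝ → ℂ)
    (hP : ∀ (z : ℂ) (t : ℝ), P z t =
      deriv (fun s : ℝ => F z s) t / (z * deriv (fun w : ℂ => F w t) z)) :
    ∀ z ∈ ball (0:ℂ) 1, z ≠ 0 → ∀ t : ℝ, 0 ≤ t →
      z * (deriv f ((Real.exp (-t) : ℂ) * z) * (Real.exp (-t) : ℂ) -
        ((Real.exp t - Real.exp (-t) : ℝ) : ℂ)) ≠ 0 ∧
      ‖(P z t - 1) / (P z t + 1)‖ =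
        Real.exp (-(2 * t)) * ‖deriv f ((Real.exp (-t) : ℂ) * z) + 1‖ ∧
      ‖(P z t - 1) / (P z t + 1)‖ ≤ k ∧
      0 < (P z t).re := by
  obtain rfl : F = loewnerFamily f := funext fun z => funext (hF z)
  intro z hz hz0 t ht
  have hw := exp_neg_mul_mem_ball hz ht
  have hfw : DifferentiableAt ℂ f (Real.exp (-t) * z) :=
    hf.differentiableOn.differentiableAt (isOpen_ball.mem_nhds hw)
  set b := deriv f (Real.exp (-t) * z) + 1
  have hbk : ‖b‖ ≤ k := hf' _ hw
  have hbE : ‖b‖ < Real.exp (2 * t) :=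
    hbk.trans_lt (hk.2.trans_le (Real.one_le_exp (by linarith)))
  have hEb := ofReal_sub_ne_zero_of_norm_lt hbE
  have hc : (Real.exp (-t) : ℂ) ≠ 0 := ofReal_ne_zero.mpr (Real.exp_pos _).ne'
  have hdenom : z * (deriv f (Real.exp (-t) * z) * Real.exp (-t) -
      ((Real.exp t - Real.exp (-t) : ℝ) : ℂ)) = -(Real.exp (-t) * z * (Real.exp (2 * t) - b)) := by
    rw [mul_exp_neg_sub_eq]
    ring
  have hPz : P z t = (Real.exp (2 * t) + b) / (Real.exp (2 * t) - b) := by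
    rw [hP, (hasDerivAt_loewnerFamily_time hfw).deriv,
      (hasDerivAt_loewnerFamily_space hfw).deriv, hdenom, neg_mul, div_neg, ← neg_div, neg_neg,
      mul_div_mul_left _ _ (mul_ne_zero hc hz0)]
  have hratio : ‖(P z t - 1) / (P z t + 1)‖ = Real.exp (-(2 * t)) * ‖b‖ := by
    rw [hPz, cayley_sub_one_div_add_one hEb, norm_div, norm_real,
      Real.norm_of_nonneg (Real.exp_pos _).le, Real.exp_neg, div_eq_inv_mul]
  refine ⟨?_, hratio, ?_, hPz ▸ re_cayley_pos hbE⟩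
  · rw [hdenom]
    exact neg_ne_zero.mpr (mul_ne_zero (mul_ne_zero hc hz0) hEb)
  · rw [hratio]
    calc Real.exp (-(2 * t)) * ‖b‖ ≤ 1 * k := by
          gcongr
          exact Real.exp_le_one_iff.mpr (by linarith)
      _ = k := one_mul k

theorem stmt13 (f : ℂ → ℂ) (k : ℝ) (hk : 0 < k ∧ k < 1)
    (hf : AnalyticOn ℂ f (ball 0 1)) (hf0 : f 0 = 0)
    (hf' : ∀ z ∈ ball (0:ℂ) 1, ‖deriv f z + 1‖ ≤ k)
    (F : ℂ → ℝ → ℂ)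
    (hF : ∀ (z : ℂ) (t : ℝ), F z t =
      f ((Real.exp (-t) : ℂ) * z) - z * ((Real.exp t - Real.exp (-t) : ℝ) : ℂ))
    (P : ℂ → ℝ → ℂ)
    (hP : ∀ (z : ℂ) (t : ℝ), P z t =
      deriv (fun s : ℝ => F z s) t / (z * deriv (fun w : ℂ => F w t) z)) :
    ∀ z ∈ ball (0:ℂ) 1, z ≠ 0 → ∀ t : ℝ, 0 ≤ t →
      z * (deriv f ((Real.exp (-t) : ℂ) * z) * (Real.exp (-t) : ℂ) -
        ((Real.exp t - Real.exp (-t) : ℝ) : ℂ)) ≠ 0 ∧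
      ‖(P z t - 1) / (P z t + 1)‖ =
        Real.exp (-(2 * t)) * ‖deriv f ((Real.exp (-t) : ℂ) * z) + 1‖ ∧
      ‖(P z t - 1) / (P z t + 1)‖ ≤ k ∧
      0 < (P z t).re :=
  stmt13_general f k hk hf hf' F hF P hP
end

section
/- Let w be analytic on the closed unit disc neighborhood (i.e., on D) with w(0)=0 and |w'(z)| ≤ k for all z ∈ D, where k ∈ (0,1). Define G : ℂ → ℂ by G(ζ) = ζ + w(1/ζ) for |ζ| > 1 and G(ζ) = ζ + w(conj(ζ)) for |ζ| ≤ 1 (using the continuous extension of w to the closed disc). Then G is continuous on ℂ and injective on ℂ; in particular g(ζ) = ζ + w(1/ζ) is univalent on D* = {ζ : |ζ| > 1}. -/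
/-!
Put `a ζ = 1 / ζ` for `‖ζ‖ > 1` and `a ζ = conj ζ` otherwise, so that `G = id + w ∘ a`. The map `a`
is `1`-Lipschitz into the closed disc: across the unit circle this is
`‖1 - z conj u‖² - ‖z - u‖² = (1 - ‖z‖²)(1 - ‖u‖²) ≤ 0`. By the mean value inequality and
continuity up to the boundary, `w` is `k`-Lipschitz on the closed disc, so `w ∘ a` is a
`k`-Lipschitz perturbation of the identity with `k < 1`: `G` is Lipschitz and antilipschitz.
-/

open Complex ComplexConjugate Metric Set
open scoped NNReal

theorem lipschitzOnWith_closedBall_of_norm_deriv_le {𝕜 F : Type*} [RCLike 𝕜]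
    [NormedAddCommGroup F] [NormedSpace 𝕜 F] {f : 𝕜 → F} {c : 𝕜} {r : ℝ} {C : ℝ≥0}
    (hr : r ≠ 0) (hf : DifferentiableOn 𝕜 f (ball c r)) (hcont : ContinuousOn f (closedBall c r))
    (bound : ∀ z ∈ ball c r, ‖deriv f z‖ ≤ C) : LipschitzOnWith C f (closedBall c r) := by
  rw [← closure_ball c hr] at hcont ⊢
  exact LipschitzOnWith.closure hcont <| (convex_ball c r).lipschitzOnWith_of_nnnorm_deriv_le
    (fun z hz => hf.differentiableAt (isOpen_ball.mem_nhds hz)) bound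

namespace Complex

theorem normSq_one_sub_mul_conj_sub_normSq_sub (z u : ℂ) :
    normSq (1 - z * conj u) - normSq (z - u) = (1 - normSq z) * (1 - normSq u) := by
  simp only [normSq_apply, sub_re, sub_im, mul_re, mul_im, conj_re, conj_im, one_re, one_im]
  ring

theorem norm_one_sub_mul_conj_le_norm_sub {z u : ℂ} (hz : 1 ≤ ‖z‖) (hu : ‖u‖ ≤ 1) :
    ‖1 - z * conj u‖ ≤ ‖z - u‖ := by
  have hz' : 1 ≤ normSq z := one_le_normSq_iff.mpr hz
  have hu' : normSq u ≤ 1 := by rw [normSq_eq_norm_sq]; nlinarith [norm_nonneg u]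
  have key := normSq_one_sub_mul_conj_sub_normSq_sub z u
  rw [← sq_le_sq₀ (norm_nonneg _) (norm_nonneg _), Complex.sq_norm, Complex.sq_norm]
  nlinarith

theorem norm_one_div_sub_conj_le_norm_sub {z u : ℂ} (hz : 1 ≤ ‖z‖) (hu : ‖u‖ ≤ 1) :
    ‖1 / z - conj u‖ ≤ ‖z - u‖ := by
  have hz0 : z ≠ 0 := norm_pos_iff.mp (by linarith)
  calc ‖1 / z - conj u‖ = ‖1 - z * conj u‖ / ‖z‖ := by
        rw [← norm_div, sub_div, mul_div_cancel_left₀ _ hz0]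
    _ ≤ ‖1 - z * conj u‖ := div_le_self (norm_nonneg _) hz
    _ ≤ ‖z - u‖ := norm_one_sub_mul_conj_le_norm_sub hz hu

theorem norm_one_div_sub_one_div_le_norm_sub {z u : ℂ} (hz : 1 ≤ ‖z‖) (hu : 1 ≤ ‖u‖) :
    ‖1 / z - 1 / u‖ ≤ ‖z - u‖ := by
  rw [← dist_eq_norm, ← dist_eq_norm, one_div, one_div, dist_inv_inv₀ (norm_pos_iff.mp (by linarith))
    (norm_pos_iff.mp (by linarith))]
  exact div_le_self dist_nonneg (one_le_mul_of_one_le_of_one_le hz hu)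

noncomputable def unitDiscFold (ζ : ℂ) : ℂ := if 1 < ‖ζ‖ then 1 / ζ else conj ζ

theorem norm_unitDiscFold_le_one (ζ : ℂ) : ‖unitDiscFold ζ‖ ≤ 1 := by
  unfold unitDiscFold
  split_ifs with h
  · rw [norm_div, norm_one]
    exact div_le_one_of_le₀ h.le (norm_nonneg ζ)
  · simpa using h

theorem lipschitzWith_unitDiscFold : LipschitzWith 1 unitDiscFold := by
  refine LipschitzWith.of_dist_le_mul fun z u => ?_
  rw [NNReal.coe_one, one_mul, dist_eq_norm, dist_eq_norm]
  unfold unitDiscFold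
  split_ifs with hz hu hu
  · exact norm_one_div_sub_one_div_le_norm_sub hz.le hu.le
  · exact norm_one_div_sub_conj_le_norm_sub hz.le (not_lt.mp hu)
  · rw [← norm_neg, neg_sub, ← norm_neg (z - u), neg_sub]
    exact norm_one_div_sub_conj_le_norm_sub hu.le (not_lt.mp hz)
  · rw [← map_sub, norm_conj]

theorem LipschitzOnWith.comp_unitDiscFold {F : Type*} [PseudoEMetricSpace F] {f : ℂ → F}
    {K : ℝ≥0} (hf : LipschitzOnWith K f (closedBall 0 1)) : LipschitzWith K (f ∘ unitDiscFold) := by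
  simpa using lipschitzOnWith_univ.mp (hf.comp lipschitzWith_unitDiscFold.lipschitzOnWith
    fun ζ _ => mem_closedBall_zero_iff.mpr (norm_unitDiscFold_le_one ζ))

end Complex

theorem stmt14_general (w : ℂ → ℂ) (k : ℝ) (hk : 0 < k ∧ k < 1)
    (hw : AnalyticOn ℂ w (ball 0 1))
    (hwc : ContinuousOn w (closedBall 0 1))
    (hw' : ∀ z ∈ ball (0:ℂ) 1, ‖deriv w z‖ ≤ k)
    (G : ℂ → ℂ)
    (hGdef : ∀ ζ : ℂ, G ζ = if 1 < ‖ζ‖ then ζ + w (1 / ζ)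
      else ζ + w (starRingEnd ℂ ζ)) :
    Continuous G ∧ Function.Injective G ∧
    Set.InjOn (fun ζ : ℂ => ζ + w (1 / ζ)) {ζ : ℂ | 1 < ‖ζ‖} := by
  lift k to ℝ≥0 using hk.1.le
  have hfold : LipschitzWith k (w ∘ unitDiscFold) :=
    (lipschitzOnWith_closedBall_of_norm_deriv_le one_ne_zero hw.differentiableOn hwc
      hw').comp_unitDiscFold
  have hG : G = fun ζ => ζ + (w ∘ unitDiscFold) ζ := by
    ext1 ζ
    rw [hGdef, Function.comp_apply, unitDiscFold]
    split_ifs <;> rfl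
  have hinj : Function.Injective G := by
    rw [hG]
    exact (AntilipschitzWith.id.add_lipschitzWith hfold (by simpa using hk.2)).injective
  refine ⟨hG ▸ (LipschitzWith.id.add hfold).continuous, hinj, fun ζ₁ h₁ ζ₂ h₂ h => hinj ?_⟩
  simpa only [hGdef, if_pos h₁.out, if_pos h₂.out] using h

theorem stmt14 (w : ℂ → ℂ) (k : ℝ) (hk : 0 < k ∧ k < 1)
    (hw : AnalyticOn ℂ w (ball 0 1)) (hw0 : w 0 = 0)
    (hwc : ContinuousOn w (closedBall 0 1))
    (hw' : ∀ z ∈ ball (0:ℂ) 1, ‖deriv w z‖ ≤ k)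
    (G : ℂ → ℂ)
    (hGdef : ∀ ζ : ℂ, G ζ = if 1 < ‖ζ‖ then ζ + w (1 / ζ)
      else ζ + w (starRingEnd ℂ ζ)) :
    Continuous G ∧ Function.Injective G ∧
    Set.InjOn (fun ζ : ℂ => ζ + w (1 / ζ)) {ζ : ℂ | 1 < ‖ζ‖} :=
  stmt14_general w k hk hw hwc hw' G hGdef
end
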